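/- Let P = {1,…,N} and A_i ∈ ℝ^{d×d} for i ∈ P. Suppose there exist symmetric positive definite matrices P_i, a constant λ_0 > 0 with ⟨P_i e^{A_i t} ξ, e^{A_i t} ξ⟩ ≤ e^{−2λ_0 t} ⟨P_i ξ, ξ⟩ for all i ∈ P, ξ ∈ ℝ^d, t ≥ 0, and a constant μ ≥ 1 with ⟨P_j z, z⟩ ≤ μ ⟨P_i z, z⟩ for all z ∈ ℝ^d and all i, j ∈ P. Fix N_0 > 0 and τ_a > ln μ / (2λ_0). Then there exists a class-KL function β (depending only on N_0, τ_a, μ, λ_0 and the matrices P_i) such that for every switching signal σ with average dwell time τ_a and chatter bound N_0 (i.e., the number N_σ(T,t) of switches on every interval (t, T] satisfies N_σ(T,t) ≤ N_0 + (T − t)/τ_a for all T ≥ t ≥ 0), every solution of ẋ(t) = A_{σ(t)} x(t) satisfies ‖x(t)‖ ≤ β(‖x(0)‖, t) for all t ≥ 0; in particular the switched system is globally uniformly asymptotically stable over this class of switching signals. -/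

import Mathlib

open Filter
open scoped RealInnerProductSpace

/-- The quadratic Lyapunov-like function `ξ ↦ ⟨Pξ, ξ⟩` associated with a matrix `P`. -/
noncomputable def quadForm {d : ℕ} (P : Matrix (Fin d) (Fin d) ℝ)
    (ξ : EuclideanSpace ℝ (Fin d)) : ℝ :=
  ⟪Matrix.toEuclideanLin P ξ, ξ⟫

/-- `x` is a solution on `[0,∞)` of the switched linear system generated by the
family `A` and the switching signal with switching instants `τ` and index sequence `s`. -/
def IsSwitchedSolution {d N : ℕ} (A : Fin N → Matrix (Fin d) (Fin d) ℝ)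
    (τ : ℕ → ℝ) (s : ℕ → Fin N) (x : ℝ → EuclideanSpace ℝ (Fin d)) : Prop :=
  ContinuousOn x (Set.Ici 0) ∧
  ∀ n : ℕ, ∀ t ∈ Set.Ico (τ n) (τ (n + 1)),
    HasDerivWithinAt x (Matrix.toEuclideanLin (A (s n)) (x t)) (Set.Ico (τ n) (τ (n + 1))) t

/-- `β` is a class-KL function on `[0,∞) × [0,∞)`: for each fixed `t ≥ 0`, `β(·,t)` is
continuous, strictly increasing and zero at zero; for each fixed `r ≥ 0`, `β(r,·)` is
decreasing and tends to `0` at infinity. -/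
def IsClassKL (β : ℝ → ℝ → ℝ) : Prop :=
  (∀ t : ℝ, 0 ≤ t → β 0 t = 0 ∧ StrictMonoOn (fun r => β r t) (Set.Ici 0) ∧
    ContinuousOn (fun r => β r t) (Set.Ici 0)) ∧
  (∀ r : ℝ, 0 ≤ r → AntitoneOn (β r) (Set.Ici 0) ∧ Tendsto (β r) atTop (nhds 0))

/-!
Between consecutive switching instants the solution is `x(u) = exp((u - τₙ) A) x(τₙ)` by
uniqueness for linear ODEs, so `V(u) = ⟨P_{σ(u)} x(u), x(u)⟩` decays at the rate `2λ₀` there,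
while at each switch it grows at most by the factor `μ`. Hence `V(t) ≤ μⁿ exp(-2λ₀ t) V(0)` with
`n` the number of switches in `(0, t]`, and the chatter bound `n ≤ N₀ + t / τₐ` turns `μⁿ` into
`μ^N₀ exp(t log μ / τₐ)`. Since `τₐ > log μ / (2λ₀)` this is absorbed by the decay, leaving the
rate `λ = λ₀ - log μ / (2τₐ) > 0`; uniform bounds `a‖z‖² ≤ V_i(z) ≤ b‖z‖²` then give
`‖x(t)‖ ≤ √(b μ^N₀ / a) exp(-λt) ‖x(0)‖`.
-/

open NormedSpace Set Matrix Topology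

section QuadForm

variable {d : ℕ}

lemma quadForm_smul (P : Matrix (Fin d) (Fin d) ℝ) (c : ℝ) (z : EuclideanSpace ℝ (Fin d)) :
    quadForm P (c • z) = c ^ 2 * quadForm P z := by
  simp only [quadForm, map_smul, real_inner_smul_left, real_inner_smul_right]
  ring

lemma continuous_quadForm (P : Matrix (Fin d) (Fin d) ℝ) : Continuous (quadForm P) :=
  (toEuclideanCLM (𝕜 := ℝ) P).continuous.inner continuous_id

lemma quadForm_eq_dotProduct (P : Matrix (Fin d) (Fin d) ℝ) (z : EuclideanSpace ℝ (Fin d)) :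
    quadForm P z = z.ofLp ⬝ᵥ P *ᵥ z.ofLp := by
  rw [← inner_toEuclideanCLM, real_inner_comm]
  rfl

lemma Matrix.PosDef.quadForm_pos {P : Matrix (Fin d) (Fin d) ℝ} (hP : P.PosDef)
    {z : EuclideanSpace ℝ (Fin d)} (hz : z ≠ 0) : 0 < quadForm P z := by
  rw [quadForm_eq_dotProduct]
  simpa using hP.dotProduct_mulVec_pos (x := z.ofLp) (by simpa using hz)

lemma Matrix.PosDef.eventually_mul_sq_le_quadForm {P : Matrix (Fin d) (Fin d) ℝ}
    (hP : P.PosDef) : ∀ᶠ a in 𝓝[>] 0, ∀ z, a * ‖z‖ ^ 2 ≤ quadForm P z := by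
  obtain ⟨a₀, ha₀, hsphere⟩ :=
    (isCompact_sphere (0 : EuclideanSpace ℝ (Fin d)) 1).exists_forall_le'
      (continuous_quadForm P).continuousOn
      fun z hz => hP.quadForm_pos (ne_zero_of_mem_unit_sphere ⟨z, hz⟩)
  filter_upwards [Ioc_mem_nhdsGT ha₀] with a ha z
  rcases eq_or_ne z 0 with rfl | hz
  · simp [quadForm]
  have hnorm : 0 < ‖z‖ := norm_pos_iff.2 hz
  have hunit := hsphere (‖z‖⁻¹ • z) (by simp [norm_smul, hnorm.ne'])
  rw [quadForm_smul, inv_pow] at hunit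
  calc a * ‖z‖ ^ 2 ≤ a₀ * ‖z‖ ^ 2 := by gcongr; exact ha.2
    _ ≤ quadForm P z := by rwa [le_inv_mul_iff₀ (by positivity), mul_comm] at hunit

lemma eventually_quadForm_le_mul_sq (P : Matrix (Fin d) (Fin d) ℝ) :
    ∀ᶠ b in atTop, ∀ z, quadForm P z ≤ b * ‖z‖ ^ 2 := by
  set L := toEuclideanCLM (𝕜 := ℝ) P
  filter_upwards [eventually_ge_atTop ‖L‖] with b hb z
  calc quadForm P z ≤ ‖L z‖ * ‖z‖ := real_inner_le_norm _ _
    _ ≤ ‖L‖ * ‖z‖ * ‖z‖ := by gcongr; exact L.le_opNorm z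
    _ ≤ b * ‖z‖ ^ 2 := by rw [mul_assoc, ← sq]; gcongr

lemma exists_uniform_quadForm_bounds {ι : Type*} [Finite ι] {P : ι → Matrix (Fin d) (Fin d) ℝ}
    (hP : ∀ i, (P i).PosDef) :
    ∃ a b : ℝ, 0 < a ∧ 0 < b ∧ ∀ i z,
      a * ‖z‖ ^ 2 ≤ quadForm (P i) z ∧ quadForm (P i) z ≤ b * ‖z‖ ^ 2 := by
  obtain ⟨a, hlower, ha⟩ :=
    ((eventually_all.2 fun i => PosDef.eventually_mul_sq_le_quadForm (hP i)).and
      self_mem_nhdsWithin).exists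
  obtain ⟨b, hupper, hb⟩ := ((eventually_all.2 fun i => eventually_quadForm_le_mul_sq (P i)).and
    (eventually_gt_atTop 0)).exists
  exact ⟨a, b, ha, hb, fun i z => ⟨hlower i z, hupper i z⟩⟩

end QuadForm

section Flow

variable {d : ℕ}

open scoped Matrix.Norms.L2Operator in
lemma Matrix.toEuclideanCLM_exp (M : Matrix (Fin d) (Fin d) ℝ) :
    toEuclideanCLM (𝕜 := ℝ) (exp M) = exp (toEuclideanCLM (𝕜 := ℝ) M) :=
  letI : NormedAlgebra ℚ (Matrix (Fin d) (Fin d) ℝ) := .restrictScalars ℚ ℝ _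
  map_exp (toEuclideanCLM (𝕜 := ℝ) (n := Fin d)) (LinearMap.continuous_of_finiteDimensional
    (toEuclideanCLM (𝕜 := ℝ) (n := Fin d)).toAlgEquiv.toLinearEquiv.toLinearMap) M

lemma hasDerivAt_exp_sub_smul_apply {E : Type*} [NormedAddCommGroup E] [NormedSpace ℝ E]
    [CompleteSpace E] (L : E →L[ℝ] E) (ξ : E) (a t : ℝ) :
    HasDerivAt (fun u : ℝ => exp ((u - a) • L) ξ) (L (exp ((t - a) • L) ξ)) t := by
  have hexp : HasDerivAt (fun u : ℝ => exp ((u - a) • L)) (L * exp ((t - a) • L)) t := by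
    simpa [Function.comp_def] using
      (hasDerivAt_exp_smul_const' L (t - a)).scomp t ((hasDerivAt_id t).sub_const a)
  simpa using hexp.clm_apply (hasDerivAt_const t ξ)

lemma eq_toEuclideanLin_exp_of_hasDerivWithinAt (M : Matrix (Fin d) (Fin d) ℝ)
    {x : ℝ → EuclideanSpace ℝ (Fin d)} {a b : ℝ} (hx : ContinuousOn x (Icc a b))
    (hx' : ∀ t ∈ Ico a b, HasDerivWithinAt x (toEuclideanLin M (x t)) (Ici t) t) :
    ∀ t ∈ Icc a b, x t = toEuclideanLin (exp ((t - a) • M)) (x a) := by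
  set L := toEuclideanCLM (𝕜 := ℝ) M
  have hflow := hasDerivAt_exp_sub_smul_apply L (x a) a
  have hsol : EqOn x (fun u => exp ((u - a) • L) (x a)) (Icc a b) :=
    ODE_solution_unique_of_mem_Icc_right (v := fun _ => L) (s := fun _ => univ) (K := ‖L‖₊)
      (fun _ _ => L.lipschitz.lipschitzOnWith) hx hx' (fun _ _ => trivial)
      (fun t _ => (hflow t).continuousAt.continuousWithinAt)
      (fun t _ => (hflow t).hasDerivWithinAt) (fun _ _ => trivial)
      (by rw [sub_self, zero_smul ℝ L, exp_zero]; rfl)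
  intro t ht
  have hexp := DFunLike.congr_fun (toEuclideanCLM_exp ((t - a) • M)) (x a)
  rw [map_smul] at hexp
  exact (hsol ht).trans hexp.symm

end Flow

lemma le_pow_mul_exp_of_decay_of_jump {V : ℕ → ℝ → ℝ} {τ : ℕ → ℝ} {μ c : ℝ} (hμ : 0 ≤ μ)
    (hτ : Monotone τ)
    (hdecay : ∀ n, ∀ u ∈ Icc (τ n) (τ (n + 1)), V n u ≤ Real.exp (-c * (u - τ n)) * V n (τ n))
    (hjump : ∀ n, V (n + 1) (τ (n + 1)) ≤ μ * V n (τ (n + 1))) (n : ℕ) :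
    ∀ u ∈ Icc (τ n) (τ (n + 1)), V n u ≤ μ ^ n * Real.exp (-c * (u - τ 0)) * V 0 (τ 0) := by
  induction n with
  | zero => simpa using hdecay 0
  | succ n ih =>
    intro u hu
    have hprev := ih (τ (n + 1)) ⟨hτ n.le_succ, le_rfl⟩
    calc V (n + 1) u ≤ Real.exp (-c * (u - τ (n + 1))) * V (n + 1) (τ (n + 1)) := hdecay _ u hu
      _ ≤ Real.exp (-c * (u - τ (n + 1))) *
            (μ * (μ ^ n * Real.exp (-c * (τ (n + 1) - τ 0)) * V 0 (τ 0))) := by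
        gcongr
        exact (hjump n).trans (mul_le_mul_of_nonneg_left hprev hμ)
      _ = μ ^ (n + 1) * Real.exp (-c * (u - τ 0)) * V 0 (τ 0) := by
        rw [show -c * (u - τ 0) = -c * (u - τ (n + 1)) + -c * (τ (n + 1) - τ 0) by ring,
          Real.exp_add, pow_succ]
        ring

section SwitchedSystem

variable {d N : ℕ} {A : Fin N → Matrix (Fin d) (Fin d) ℝ} {τ : ℕ → ℝ} {s : ℕ → Fin N}
  {x : ℝ → EuclideanSpace ℝ (Fin d)}

lemma IsSwitchedSolution.eq_toEuclideanLin_exp (hx : IsSwitchedSolution A τ s x)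
    (hτ₀ : 0 ≤ τ 0) (hτ : Monotone τ) (n : ℕ) :
    ∀ u ∈ Icc (τ n) (τ (n + 1)), x u = toEuclideanLin (exp ((u - τ n) • A (s n))) (x (τ n)) := by
  refine eq_toEuclideanLin_exp_of_hasDerivWithinAt _
    (hx.1.mono fun v hv => hτ₀.trans ((hτ n.zero_le).trans hv.1)) fun u hu => ?_
  exact (hx.2 n u hu).mono_of_mem_nhdsWithin (Ico_mem_nhdsGE_of_mem hu)

lemma IsSwitchedSolution.quadForm_le_pow_mul_exp (hx : IsSwitchedSolution A τ s x)
    (hτ₀ : 0 ≤ τ 0) (hτ : Monotone τ) {P : Fin N → Matrix (Fin d) (Fin d) ℝ} {lam0 μ : ℝ}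
    (hdecay : ∀ (i : Fin N) (ξ : EuclideanSpace ℝ (Fin d)) (t : ℝ), 0 ≤ t →
      quadForm (P i) (toEuclideanLin (exp (t • A i)) ξ) ≤
        Real.exp (-(2 * lam0) * t) * quadForm (P i) ξ)
    (hμ : 0 ≤ μ) (hjump : ∀ i j z, quadForm (P j) z ≤ μ * quadForm (P i) z) (n : ℕ) :
    ∀ u ∈ Icc (τ n) (τ (n + 1)), quadForm (P (s n)) (x u) ≤
      μ ^ n * Real.exp (-(2 * lam0) * (u - τ 0)) * quadForm (P (s 0)) (x (τ 0)) :=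
  le_pow_mul_exp_of_decay_of_jump (V := fun n u => quadForm (P (s n)) (x u)) hμ hτ
    (fun n u hu => hx.eq_toEuclideanLin_exp hτ₀ hτ n u hu ▸ hdecay _ _ _ (sub_nonneg.2 hu.1))
    (fun _ => hjump _ _ _) n

end SwitchedSystem

lemma exists_mem_Ico_of_tendsto_atTop {τ : ℕ → ℝ} (hτ : Tendsto τ atTop atTop) {t : ℝ}
    (ht : τ 0 ≤ t) : ∃ n, t ∈ Ico (τ n) (τ (n + 1)) := by
  classical
  have hex : ∃ m, t < τ m := (hτ.eventually_gt_atTop t).exists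
  have hfind_ne : Nat.find hex ≠ 0 := fun h => (h ▸ Nat.find_spec hex).not_ge ht
  obtain ⟨n, hn⟩ := Nat.exists_eq_succ_of_ne_zero hfind_ne
  refine ⟨n, not_lt.1 (Nat.find_min hex ?_), ?_⟩
  · rw [hn]; exact n.lt_succ_self
  · rw [← Nat.succ_eq_add_one, ← hn]; exact Nat.find_spec hex

lemma StrictMono.card_setOf_mem_Ioc_eq {τ : ℕ → ℝ} (hτ : StrictMono τ) {n : ℕ} {t : ℝ}
    (ht : t ∈ Ico (τ n) (τ (n + 1))) :
    Nat.card {k : ℕ | 1 ≤ k ∧ τ 0 < τ k ∧ τ k ≤ t} = n := by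
  have hset : {k : ℕ | 1 ≤ k ∧ τ 0 < τ k ∧ τ k ≤ t} = Icc 1 n := by
    ext k
    simp only [mem_ofPred_eq, mem_Icc, hτ.lt_iff_lt, Nat.one_le_iff_ne_zero, Nat.pos_iff_ne_zero]
    constructor
    · rintro ⟨hk, -, hkt⟩
      exact ⟨hk, Nat.lt_succ_iff.1 (hτ.lt_iff_lt.1 (hkt.trans_lt ht.2))⟩
    · rintro ⟨hk, hkn⟩
      exact ⟨hk, hk, (hτ.monotone hkn).trans ht.1⟩
  rw [hset, Nat.card_coe_set_eq, ← Finset.coe_Icc, ncard_coe_finset, Nat.card_Icc,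
    Nat.add_sub_cancel]

lemma isClassKL_mul_exp_mul {C lam : ℝ} (hC : 0 < C) (hlam : 0 < lam) :
    IsClassKL (fun r t => C * Real.exp (-(lam * t)) * r) := by
  refine ⟨fun t _ => ⟨mul_zero _, fun r₁ _ r₂ _ h => by beta_reduce; gcongr, by fun_prop⟩,
    fun r hr => ⟨fun t₁ _ t₂ _ h => by beta_reduce; gcongr, ?_⟩⟩
  simpa using ((Real.tendsto_exp_neg_atTop_nhds_zero.comp
    (tendsto_id.const_mul_atTop hlam)).const_mul C).mul_const r

lemma pow_mul_exp_le_of_le_add_div {μ lam0 N0 τa t : ℝ} {n : ℕ} (hμ : 1 ≤ μ)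
    (hn : (n : ℝ) ≤ N0 + t / τa) :
    μ ^ n * Real.exp (-(2 * lam0) * t) ≤
      Real.exp (N0 * Real.log μ) * Real.exp (-((lam0 - Real.log μ / (2 * τa)) * t)) ^ 2 := by
  have hcost := mul_le_mul_of_nonneg_right hn (Real.log_nonneg hμ)
  calc μ ^ n * Real.exp (-(2 * lam0) * t)
      = Real.exp (n * Real.log μ + -(2 * lam0) * t) := by
        rw [Real.exp_add, Real.exp_nat_mul, Real.exp_log (zero_lt_one.trans_le hμ)]
    _ ≤ Real.exp (N0 * Real.log μ + 2 * -((lam0 - Real.log μ / (2 * τa)) * t)) := by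
        refine Real.exp_le_exp.2 ?_
        linarith [show 2 * -((lam0 - Real.log μ / (2 * τa)) * t) =
          -(2 * lam0) * t + t / τa * Real.log μ by ring]
    _ = _ := by rw [Real.exp_add, ← Real.exp_nat_mul]; push_cast; rfl

lemma le_sqrt_mul_mul_of_mul_sq_le {a b K e r y : ℝ} (ha : 0 < a) (hy : 0 ≤ y)
    (h : a * y ^ 2 ≤ K * e ^ 2 * (b * r ^ 2)) (hbK : 0 ≤ b * K) (he : 0 ≤ e) (hr : 0 ≤ r) :
    y ≤ √(b * K / a) * e * r := by
  rw [← pow_le_pow_iff_left₀ hy (by positivity) two_ne_zero, mul_pow, mul_pow,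
    Real.sq_sqrt (by positivity), div_mul_eq_mul_div, div_mul_eq_mul_div, le_div_iff₀ ha]
  linarith

theorem stmt14_general {d N : ℕ}
    (A : Fin N → Matrix (Fin d) (Fin d) ℝ)
    (P : Fin N → Matrix (Fin d) (Fin d) ℝ)
    (lam0 : ℝ) (hlam0 : 0 < lam0)
    (hP : ∀ i, (P i).PosDef)
    (hdecay : ∀ (i : Fin N) (ξ : EuclideanSpace ℝ (Fin d)) (t : ℝ), 0 ≤ t →
      quadForm (P i) (Matrix.toEuclideanLin (NormedSpace.exp (t • A i)) ξ) ≤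
        Real.exp (-(2 * lam0) * t) * quadForm (P i) ξ)
    (μ : ℝ) (hμ1 : 1 ≤ μ)
    (hμ : ∀ i j : Fin N, ∀ z : EuclideanSpace ℝ (Fin d),
      quadForm (P j) z ≤ μ * quadForm (P i) z)
    (N0 τa : ℝ) (hτa : Real.log μ / (2 * lam0) < τa) :
    ∃ β : ℝ → ℝ → ℝ, IsClassKL β ∧
      ∀ (τ : ℕ → ℝ) (s : ℕ → Fin N),
        τ 0 = 0 → StrictMono τ → Tendsto τ atTop atTop → (∀ n, s (n + 1) ≠ s n) →
        -- average dwell time `τa` with chatter bound `N0`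
        (∀ T t : ℝ, 0 ≤ t → t ≤ T →
          (Nat.card {n : ℕ | 1 ≤ n ∧ t < τ n ∧ τ n ≤ T} : ℝ) ≤ N0 + (T - t) / τa) →
        ∀ x : ℝ → EuclideanSpace ℝ (Fin d), IsSwitchedSolution A τ s x →
          ∀ t : ℝ, 0 ≤ t → ‖x t‖ ≤ β (‖x 0‖) t := by
  obtain ⟨a, b, ha, hb, hab⟩ := exists_uniform_quadForm_bounds hP
  have hτa_pos : 0 < τa := (div_nonneg (Real.log_nonneg hμ1) (by positivity)).trans_lt hτa
  set lam := lam0 - Real.log μ / (2 * τa)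
  have hlam : 0 < lam := by
    rw [div_lt_iff₀ (by positivity)] at hτa
    rw [sub_pos, div_lt_iff₀ (by positivity)]
    linarith
  set K := Real.exp (N0 * Real.log μ)
  refine ⟨fun r t => √(b * K / a) * Real.exp (-(lam * t)) * r,
    isClassKL_mul_exp_mul (by positivity) hlam, ?_⟩
  intro τ s hτ0 hτ htop _ hADT x hx t ht
  obtain ⟨n, hn⟩ := exists_mem_Ico_of_tendsto_atTop htop (hτ0 ▸ ht)
  have hswitches : (n : ℝ) ≤ N0 + t / τa := by
    have hcount := hADT t (τ 0) hτ0.ge (hτ0 ▸ ht)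
    rwa [hτ.card_setOf_mem_Ioc_eq hn, hτ0, sub_zero] at hcount
  have hV := hx.quadForm_le_pow_mul_exp hτ0.ge hτ.monotone hdecay (by linarith) hμ n t
    (Ico_subset_Icc_self hn)
  rw [hτ0, sub_zero] at hV
  refine le_sqrt_mul_mul_of_mul_sq_le ha (norm_nonneg _) ?_ (by positivity) (by positivity)
    (norm_nonneg _)
  calc a * ‖x t‖ ^ 2 ≤ quadForm (P (s n)) (x t) := (hab _ _).1
    _ ≤ μ ^ n * Real.exp (-(2 * lam0) * t) * quadForm (P (s 0)) (x 0) := hV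
    _ ≤ K * Real.exp (-(lam * t)) ^ 2 * (b * ‖x 0‖ ^ 2) :=
      mul_le_mul (pow_mul_exp_le_of_le_add_div hμ1 hswitches) (hab _ _).2
        ((by positivity : 0 ≤ a * ‖x 0‖ ^ 2).trans (hab _ _).1) (by positivity)

/-- Average dwell time theorem: under a common exponential-decay rate `2λ₀` for the
Lyapunov-like functions, linear comparability with constant `μ ≥ 1`, and
`τ_a > ln μ / (2λ₀)`, there exists a single class-KL function `β` such that for every
switching signal with average dwell time `τ_a` and chatter bound `N₀`, every solution
satisfies `‖x(t)‖ ≤ β(‖x(0)‖, t)`; i.e., the switched system is globally uniformly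
asymptotically stable over this class of switching signals. -/
theorem stmt14 {d N : ℕ}
    (A : Fin N → Matrix (Fin d) (Fin d) ℝ)
    (P : Fin N → Matrix (Fin d) (Fin d) ℝ)
    (lam0 : ℝ) (hlam0 : 0 < lam0)
    (hP : ∀ i, (P i).PosDef)
    (hdecay : ∀ (i : Fin N) (ξ : EuclideanSpace ℝ (Fin d)) (t : ℝ), 0 ≤ t →
      quadForm (P i) (Matrix.toEuclideanLin (NormedSpace.exp (t • A i)) ξ) ≤
        Real.exp (-(2 * lam0) * t) * quadForm (P i) ξ)
    (μ : ℝ) (hμ1 : 1 ≤ μ)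
    (hμ : ∀ i j : Fin N, ∀ z : EuclideanSpace ℝ (Fin d),
      quadForm (P j) z ≤ μ * quadForm (P i) z)
    (N0 τa : ℝ) (hN0 : 0 < N0) (hτa : Real.log μ / (2 * lam0) < τa) :
    ∃ β : ℝ → ℝ → ℝ, IsClassKL β ∧
      ∀ (τ : ℕ → ℝ) (s : ℕ → Fin N),
        τ 0 = 0 → StrictMono τ → Tendsto τ atTop atTop → (∀ n, s (n + 1) ≠ s n) →
        -- average dwell time `τa` with chatter bound `N0`
        (∀ T t : ℝ, 0 ≤ t → t ≤ T →
          (Nat.card {n : ℕ | 1 ≤ n ∧ t < τ n ∧ τ n ≤ T} : ℝ) ≤ N0 + (T - t) / τa) →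
        ∀ x : ℝ → EuclideanSpace ℝ (Fin d), IsSwitchedSolution A τ s x →
          ∀ t : ℝ, 0 ≤ t → ‖x t‖ ≤ β (‖x 0‖) t :=
  stmt14_general A P lam0 hlam0 hP hdecay μ hμ1 hμ N0 τa hτa
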